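/- With τ, γ, and τ' = bk(τ,γ) = (τ − v) ∪ w as above, where v ∈ V_i and w ∈ V_j: for every t with 1 ≤ t ≤ m and t ≠ i, fl(τ,t) = fl(τ',t) (hence Φ(τ) and Φ(τ') have the same X_t-parts); moreover fl(τ,i) ⪯ fl(τ',i) in revlex and deg(Φ(τ')_{X_i}) ≤ deg(Φ(τ)_{X_i}). -/

import Mathlib

open Finset

/-- The one-block map `φ` (0-based encoding of an ordered set in listing order; output is the
multiset of 1-based variable indices). -/
def phiMap (τ : Finset ℕ) : Multiset ℕ :=
  ↑(((τ.sort (· ≤ ·)).zipIdx.map (fun p => p.1 - p.2)).filter (fun x => x ≠ 0))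

/-- The "non-initial-segment" part `ρ(Y,W)` of the inverse map `ψ(Y,W)`, for an ambient
ordered set `W` whose `a`-subsets are matched with monomials. -/
def rhoMap (a : ℕ) (μ : Multiset ℕ) : Finset ℕ :=
  ((μ.sort (· ≤ ·)).zipIdx.map (fun p => p.1 + p.2 + (a - Multiset.card μ))).toFinset

/-- The one-block map `ψ(Y,W) = σ ∪ ρ`. -/
def psiMap (a : ℕ) (μ : Multiset ℕ) : Finset ℕ :=
  Finset.range (a - Multiset.card μ) ∪ rhoMap a μ

/-- `fl(τ,i)`: the revlex-first `k`-subset of `range N` containing `s` (add the earliest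
missing elements). -/
def fillF (s : Finset ℕ) (k N : ℕ) : Finset ℕ :=
  s ∪ ((((Finset.range N) \ s).sort (· ≤ ·)).take (k - s.card)).toFinset

/-- A facet of `Λ_d`, encoded blockwise: `τ i ⊆ V_i = range (n i)` with `|τ i| ≤ a i`
(for `i < m`) and `∑ |τ i| = d`. -/
def IsFacetT (m d : ℕ) (n a : ℕ → ℕ) (τ : ℕ → Finset ℕ) : Prop :=
  (∀ i, i < m → τ i ⊆ Finset.range (n i)) ∧ (∀ i, i < m → (τ i).card ≤ a i) ∧
  (∀ i, m ≤ i → τ i = ∅) ∧ (∑ i ∈ Finset.range m, (τ i).card) = d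

/-- `Φ_i(τ) = φ(V_i, X_i)(fl(τ,i))`. -/
def PhiBlock (a n : ℕ → ℕ) (τ : ℕ → Finset ℕ) (i : ℕ) : Multiset ℕ :=
  phiMap (fillF (τ i) (a i) (n i))

/-- `b i = a i - deg Φ_i(τ)`, the size of the block-`i` part of `V[τ]`. -/
def bfun (a n : ℕ → ℕ) (τ : ℕ → Finset ℕ) (i : ℕ) : ℕ :=
  a i - Multiset.card (PhiBlock a n τ i)

/-- Offsets identifying `V[τ] = ⋃ᵢ (first `b i` elements of `V_i`)` with `range (∑ b)`. -/
def offF (b : ℕ → ℕ) (i : ℕ) : ℕ := ∑ t ∈ Finset.range i, b t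

/-- `τ ∩ V[τ]`, as a subset of `range (∑ b)` via the order isomorphism. -/
def globF (m : ℕ) (b : ℕ → ℕ) (τ : ℕ → Finset ℕ) : Finset ℕ :=
  (Finset.range m).biUnion (fun i => ((τ i) ∩ Finset.range (b i)).image (fun j => offF b i + j))

/-- The full map `Φ`: index `0` gives the `X₀`-part `Φ₀(τ) = φ(V[τ],X₀)(τ ∩ V[τ])`, and index
`i+1 ≤ m` gives the `X_i`-part `Φ_i(τ)`. -/
def PhiMapT (m : ℕ) (a n : ℕ → ℕ) (τ : ℕ → Finset ℕ) : ℕ → Multiset ℕ :=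
  fun i => if i = 0 then phiMap (globF m (bfun a n τ) τ)
    else if i ≤ m then PhiBlock a n τ (i - 1) else 0

/-- Membership in `S_d(X,(∞,a))`, blockwise: `μ 0` is the `X₀`-part (`|X₀| = ∑ a - d`) and
`μ (i+1)` is the `X_i`-part (`|X_i| = n i - a i`, of degree at most `a i`). -/
def InST (m d : ℕ) (n a : ℕ → ℕ) (μ : ℕ → Multiset ℕ) : Prop :=
  (∑ i ∈ Finset.range (m + 1), Multiset.card (μ i)) ≤ d ∧
  (∀ i, i < m → Multiset.card (μ (i + 1)) ≤ a i) ∧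
  (∀ x ∈ μ 0, 1 ≤ x ∧ x ≤ (∑ i ∈ Finset.range m, a i) - d) ∧
  (∀ i, i < m → ∀ x ∈ μ (i + 1), 1 ≤ x ∧ x ≤ n i - a i) ∧
  (∀ i, m + 1 ≤ i → μ i = 0)

/-- The inverse map `Ψ`: `Ψ(μ) ∩ V_i = Ψ_i(μ) ∪ (block-i part of Ψ₀(μ))` where
`Ψ_i(μ) = ρ(X_i,V_i)(μ_{X_i})` and `Ψ₀(μ) = ψ(X₀,V[μ])(μ_{X₀}) ⊆ V[μ] ≅ range (∑ b)`. -/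
def PsiMapT (m d : ℕ) (n a : ℕ → ℕ) (μ : ℕ → Multiset ℕ) : ℕ → Finset ℕ :=
  fun i =>
    if i < m then
      rhoMap (a i) (μ (i + 1)) ∪
        ((psiMap ((∑ t ∈ Finset.range m, (a t - Multiset.card (μ (t + 1)))) -
              ((∑ t ∈ Finset.range m, a t) - d)) (μ 0) ∩
            Finset.Ico (offF (fun t => a t - Multiset.card (μ (t + 1))) i)
              (offF (fun t => a t - Multiset.card (μ (t + 1))) i +
                (a i - Multiset.card (μ (i + 1))))).image
          (fun j => j - offF (fun t => a t - Multiset.card (μ (t + 1))) i))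
    else ∅

/-- The block-`i` part of `up(τ)`. -/
def upT (a n : ℕ → ℕ) (τ : ℕ → Finset ℕ) (i : ℕ) : Finset ℕ :=
  if (τ i).card = a i then
    (τ i).filter (fun j => ∃ g ∈ Finset.range (n i) \ τ i, g < j) else ∅

/-- The block-`i` part of `tail(τ)`. -/
def tailT (m : ℕ) (a n : ℕ → ℕ) (τ : ℕ → Finset ℕ) (i : ℕ) : Finset ℕ :=
  (τ i).filter (fun j => ∃ i₀, i₀ < m ∧ (τ i₀).card < a i₀ ∧
    (∀ t, t < i₀ → (τ t).card = a t) ∧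
    (i₀ < i ∨ (i₀ = i ∧ ∃ g, g < j ∧ g ∉ τ i ∧ g < n i)))

/-- Revlex order on equal-size index sets (smaller index = `≻`-larger element, so the
`≻`-least element of the symmetric difference is the one with largest index): `S ≻ T` iff
it lies in `T`. -/
def RevGTN (S T : Finset ℕ) : Prop :=
  ∃ v ∈ T, v ∉ S ∧ ∀ w, v < w → (w ∈ S ↔ w ∈ T)

/-!
`Φ_t(τ)` depends on `τ` only through `fl(τ,t)`. Outside block `iv` the only change is that a
non-full block receives its first gap, which is the first element `fl` would add anyway. In block
`iv`, removing `v` either leaves the filling unchanged or replaces `v` by the first gap `g < v`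
of the filling. Such a swap lowers the set in revlex, and it cannot raise the degree: for
`F = {x_0 < x_1 < ⋯}` the exponents `x_i - i` of `φ(F)` vanish exactly along the initial run
`0, 1, …, g - 1` of `F`, so `deg φ(F) = |F| - g`.
-/

theorem List.count_zero_map_sub_zipIdx {l : List ℕ} (hl : l.Pairwise (· < ·)) :
    ∀ {j r : ℕ}, (∀ x ∈ l, j ≤ x) → (∀ x, j ≤ x → x < j + r → x ∈ l) → j + r ∉ l →
      ((l.zipIdx j).map (fun p => p.1 - p.2)).count 0 = r := by
  induction l with
  | nil =>
    intro j r _ hrun _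
    cases r with
    | zero => rfl
    | succ r => exact absurd (hrun j le_rfl (by omega)) List.not_mem_nil
  | cons a t ih =>
    intro j r hlb hrun hgap
    have hat : ∀ x ∈ t, a < x := fun x hx => List.rel_of_pairwise_cons hl hx
    rw [List.zipIdx_cons, List.map_cons, List.count_cons]
    rcases (hlb a List.mem_cons_self).eq_or_lt with rfl | hja
    · cases r with
      | zero => exact absurd List.mem_cons_self hgap
      | succ r =>
        have hgap' : j + 1 + r ∉ t := fun h =>
          hgap (List.mem_cons_of_mem _ (by rwa [show j + 1 + r = j + (r + 1) by omega] at h))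
        have hrun' : ∀ x, j + 1 ≤ x → x < j + 1 + r → x ∈ t := fun x hx hxr =>
          (List.mem_cons.1 (hrun x (by omega) (by omega))).resolve_left (by omega)
        rw [ih hl.of_cons hat hrun' hgap']
        simp
    · have hr : r = 0 := by
        by_contra hr
        rcases List.mem_cons.1 (hrun j le_rfl (by omega)) with h | h
        · omega
        · exact absurd (hat j h) (by omega)
      subst hr
      rw [ih hl.of_cons (j := j + 1) (r := 0) (fun x hx => by have := hat x hx; omega)
        (fun x _ _ => by omega) (fun h => absurd (hat _ h) (by omega))]
      simp
      omega

def firstGap (F : Finset ℕ) : ℕ := Nat.find (Infinite.exists_notMem_finset F)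

theorem firstGap_notMem (F : Finset ℕ) : firstGap F ∉ F :=
  Nat.find_spec (Infinite.exists_notMem_finset F)

theorem mem_of_lt_firstGap {F : Finset ℕ} {x : ℕ} (hx : x < firstGap F) : x ∈ F :=
  not_not.1 (Nat.find_min _ hx)

theorem firstGap_le_of_notMem {F : Finset ℕ} {x : ℕ} (hx : x ∉ F) : firstGap F ≤ x :=
  Nat.find_min' _ hx

theorem le_firstGap_iff {F : Finset ℕ} {g : ℕ} : g ≤ firstGap F ↔ ∀ x < g, x ∈ F := by
  simp [firstGap, Nat.le_find_iff]

theorem firstGap_eq {F : Finset ℕ} {g : ℕ} (hg : g ∉ F) (hlt : ∀ x < g, x ∈ F) :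
    firstGap F = g :=
  le_antisymm (firstGap_le_of_notMem hg) (le_firstGap_iff.2 hlt)

theorem card_phiMap_add_firstGap (F : Finset ℕ) :
    Multiset.card (phiMap F) + firstGap F = F.card := by
  set L := ((F.sort (· ≤ ·)).zipIdx.map (fun p => p.1 - p.2)) with hL
  have hzeros : L.count 0 = firstGap F :=
    List.count_zero_map_sub_zipIdx (Finset.sortedLT_sort F).pairwise (fun _ _ => Nat.zero_le _)
      (fun x _ hx => (Finset.mem_sort _).2 (mem_of_lt_firstGap (by omega)))
      (by simpa using firstGap_notMem F)
  have hlen : L.length = F.card := by simp [hL]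
  rw [phiMap, ← hL, Multiset.coe_card, ← hzeros, ← hlen, List.count_eq_countP,
    ← List.countP_eq_length_filter, List.length_eq_countP_add_countP (· ≠ 0)]
  congr 1
  exact List.countP_congr (by simp)

theorem card_phiMap_le_of_firstGap_le {F F' : Finset ℕ} (hcard : F'.card ≤ F.card)
    (hgap : firstGap F ≤ firstGap F') :
    Multiset.card (phiMap F') ≤ Multiset.card (phiMap F) := by
  have := card_phiMap_add_firstGap F
  have := card_phiMap_add_firstGap F'
  omega

def gapSwap (F : Finset ℕ) (v : ℕ) : Finset ℕ := insert (firstGap F) (F.erase v)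

section gapSwap

variable {F : Finset ℕ} {v : ℕ}

theorem card_gapSwap (hv : v ∈ F) : (gapSwap F v).card = F.card := by
  rw [gapSwap, card_insert_of_notMem (by simp [firstGap_notMem]), card_erase_add_one hv]

theorem revGTN_gapSwap (hv : v ∈ F) (hgap : firstGap F < v) : RevGTN (gapSwap F v) F := by
  refine ⟨v, hv, ?_, fun w hw => ?_⟩
  · simp [gapSwap, hgap.ne']
  · simp [gapSwap, (hgap.trans hw).ne', hw.ne']

theorem card_phiMap_gapSwap_le (hv : v ∈ F) (hgap : firstGap F < v) :
    Multiset.card (phiMap (gapSwap F v)) ≤ Multiset.card (phiMap F) := by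
  refine card_phiMap_le_of_firstGap_le ?_ (le_firstGap_iff.2 fun x hx => ?_)
  · rw [card_gapSwap hv]
  · exact mem_insert_of_mem (mem_erase.2 ⟨by omega, mem_of_lt_firstGap hx⟩)

end gapSwap

section fillF

variable {s : Finset ℕ} {k N : ℕ}

theorem fillF_of_card_le (h : k ≤ s.card) : fillF s k N = s := by
  simp [fillF, Nat.sub_eq_zero_of_le h]

theorem fillF_insert_firstGap (hN : firstGap s < N) (hk : s.card < k) :
    fillF (insert (firstGap s) s) k N = fillF s k N := by
  set g := firstGap s
  have hgs : g ∉ s := firstGap_notMem s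
  have hmiss : range N \ s = insert g (range N \ insert g s) := by
    ext x
    by_cases hx : x = g <;> simp [hx, hN, hgs]
  have hsort : (range N \ s).sort (· ≤ ·) = g :: (range N \ insert g s).sort (· ≤ ·) := by
    rw [hmiss]
    refine sort_insert _ (fun x hx => ?_) (by simp)
    simp only [mem_sdiff, mem_insert, not_or] at hx
    exact not_lt.1 fun h => hx.2.2 (mem_of_lt_firstGap h)
  obtain ⟨r, hr⟩ : ∃ r, k - s.card = r + 1 := ⟨k - s.card - 1, by omega⟩
  have hr' : k - (insert g s).card = r := by rw [card_insert_of_notMem hgs]; omega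
  rw [fillF, fillF, hsort, hr, hr', List.take_succ_cons, List.toFinset_cons, union_insert,
    insert_union]

theorem firstGap_erase_of_firstGap_lt {v : ℕ} (h : firstGap s < v) :
    firstGap (s.erase v) = firstGap s :=
  firstGap_eq (fun hg => firstGap_notMem s (mem_of_mem_erase hg))
    fun x hx => mem_erase.2 ⟨by omega, mem_of_lt_firstGap hx⟩

theorem firstGap_erase_of_lt_firstGap {v : ℕ} (h : v < firstGap s) : firstGap (s.erase v) = v :=
  firstGap_eq (notMem_erase v s) fun x hx => mem_erase.2 ⟨by omega, mem_of_lt_firstGap (by omega)⟩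

theorem fillF_erase_of_lt_firstGap {v : ℕ} (hvN : v < N) (hk : s.card ≤ k)
    (h : v < firstGap s) : fillF (s.erase v) k N = fillF s k N := by
  have hv : v ∈ s := mem_of_lt_firstGap h
  have hcard : (s.erase v).card < k := by
    rw [card_erase_of_mem hv]; have := card_pos.2 ⟨v, hv⟩; omega
  have := fillF_insert_firstGap (s := s.erase v) (k := k) (N := N)
    (by rwa [firstGap_erase_of_lt_firstGap h]) hcard
  rwa [firstGap_erase_of_lt_firstGap h, insert_erase hv, eq_comm] at this

theorem fillF_insert_firstGap_erase {v : ℕ} (hv : v ∈ s)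
    (hN : firstGap s < N) (hk : s.card < k) :
    fillF (insert (firstGap s) (s.erase v)) k N = fillF (s.erase v) k N := by
  have hgs : firstGap s ∉ s := firstGap_notMem s
  have hcard : (s.erase v).card < k := by rw [card_erase_of_mem hv]; omega
  rcases lt_or_gt_of_ne (ne_of_mem_of_not_mem hv hgs) with hlt | hgt
  · set t := insert (firstGap s) (s.erase v)
    have hvt : firstGap t = v :=
      firstGap_eq (by simp [t, hlt.ne]) fun x hx =>
        mem_insert_of_mem (mem_erase.2 ⟨hx.ne, mem_of_lt_firstGap (hx.trans hlt)⟩)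
    have htcard : t.card < k := by
      rw [card_insert_of_notMem (by simp [hgs]), card_erase_add_one hv]; exact hk
    have hts : insert v t = insert (firstGap s) s := by rw [insert_comm, insert_erase hv]
    rw [← fillF_insert_firstGap (hvt ▸ hlt.trans hN) htcard, hvt, hts,
      fillF_insert_firstGap hN hk, fillF_erase_of_lt_firstGap (hlt.trans hN) hk.le hlt]
  · have hgap := firstGap_erase_of_firstGap_lt hgt
    rw [← hgap]
    exact fillF_insert_firstGap (hgap ▸ hN) hcard

end fillF

theorem fillF_erase_eq_or_eq_gapSwap {s : Finset ℕ} {k N v : ℕ} (hv : v ∈ s) (hvN : v < N)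
    (hk : s.card ≤ k) :
    fillF (s.erase v) k N = fillF s k N ∨
      (firstGap (fillF s k N) < v ∧ fillF (s.erase v) k N = gapSwap (fillF s k N) v) := by
  have hgs : firstGap s ∉ s := firstGap_notMem s
  rcases lt_or_gt_of_ne (ne_of_mem_of_not_mem hv hgs) with hlt | hgt
  · exact Or.inl (fillF_erase_of_lt_firstGap hvN hk hlt)
  have hcard : (s.erase v).card < k := by
    rw [card_erase_of_mem hv]; have := card_pos.2 ⟨v, hv⟩; omega
  have hfill : fillF (s.erase v) k N = fillF (insert (firstGap s) (s.erase v)) k N := by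
    have := fillF_insert_firstGap (s := s.erase v) (k := k) (N := N)
      (by rw [firstGap_erase_of_firstGap_lt hgt]; omega) hcard
    rwa [firstGap_erase_of_firstGap_lt hgt, eq_comm] at this
  have hcard' : (insert (firstGap s) s).card = s.card + 1 := card_insert_of_notMem hgs
  rw [hfill, ← erase_insert_of_ne hgt.ne]
  by_cases hfull : k ≤ s.card
  · have hfull' : k ≤ ((insert (firstGap s) s).erase v).card := by
      rw [card_erase_of_mem (mem_insert_of_mem hv)]; omega
    rw [fillF_of_card_le hfull, fillF_of_card_le hfull', erase_insert_of_ne hgt.ne]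
    exact Or.inr ⟨hgt, rfl⟩
  · rw [← fillF_insert_firstGap (hgt.trans hvN) (not_le.1 hfull)]
    exact fillF_erase_eq_or_eq_gapSwap (mem_insert_of_mem hv) hvN (by omega)
termination_by k - s.card
decreasing_by omega

theorem subset_fillF (s : Finset ℕ) (k N : ℕ) : s ⊆ fillF s k N := subset_union_left

theorem eq_or_revGTN_and_card_phiMap_le {F F' : Finset ℕ} {v : ℕ} (hv : v ∈ F)
    (h : F' = F ∨ (firstGap F < v ∧ F' = gapSwap F v)) :
    (F = F' ∨ RevGTN F' F) ∧ Multiset.card (phiMap F') ≤ Multiset.card (phiMap F) := by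
  rcases h with rfl | ⟨hgap, rfl⟩
  · exact ⟨Or.inl rfl, le_rfl⟩
  · exact ⟨Or.inr (revGTN_gapSwap hv hgap), card_phiMap_gapSwap_le hv hgap⟩

theorem mem_of_mem_tailT {m : ℕ} {a n : ℕ → ℕ} {τ : ℕ → Finset ℕ} {i j : ℕ}
    (h : j ∈ tailT m a n τ i) : j ∈ τ i :=
  (mem_filter.1 h).1

theorem mem_upT {a n : ℕ → ℕ} {τ : ℕ → Finset ℕ} {i j : ℕ} :
    j ∈ upT a n τ i ↔ (τ i).card = a i ∧ j ∈ τ i ∧ ∃ g ∈ range (n i) \ τ i, g < j := by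
  unfold upT
  split_ifs with h <;> simp [h]

theorem stmt14_general (m d : ℕ) (n a : ℕ → ℕ)
    (τ : ℕ → Finset ℕ) (hτ : IsFacetT m d n a τ)
    (iv jv i₀ j₀ : ℕ) (hiv : iv < m)
    (hswap :
      (jv ∈ tailT m a n τ iv ∧ i₀ < m ∧ (τ i₀).card < a i₀ ∧
        (∀ t, t < i₀ → (τ t).card = a t) ∧ j₀ < n i₀ ∧ j₀ ∉ τ i₀ ∧
        (∀ g, g < j₀ → g ∈ τ i₀)) ∨
      (jv ∈ upT a n τ iv ∧ i₀ = iv ∧ j₀ < n iv ∧ j₀ ∉ τ iv ∧ (∀ g, g < j₀ → g ∈ τ iv)))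
    (τ' : ℕ → Finset ℕ)
    (hτ' : τ' = fun t => (if t = i₀ then insert j₀ else id)
        (if t = iv then (τ t).erase jv else τ t)) :
    (∀ t, t < m → t ≠ iv →
      fillF (τ' t) (a t) (n t) = fillF (τ t) (a t) (n t) ∧
      PhiBlock a n τ' t = PhiBlock a n τ t) ∧
    (fillF (τ iv) (a iv) (n iv) = fillF (τ' iv) (a iv) (n iv) ∨
      RevGTN (fillF (τ' iv) (a iv) (n iv)) (fillF (τ iv) (a iv) (n iv))) ∧
    Multiset.card (PhiBlock a n τ' iv) ≤ Multiset.card (PhiBlock a n τ iv) := by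
  obtain ⟨hsub, hcard, -, -⟩ := hτ
  refine ⟨fun t _ htiv => ?_, ?_⟩
  · suffices hfill : fillF (τ' t) (a t) (n t) = fillF (τ t) (a t) (n t) from
      ⟨hfill, congrArg phiMap hfill⟩
    simp only [hτ', if_neg htiv]
    split_ifs with hti
    · subst hti
      obtain ⟨-, -, hlt, -, hj₀N, hj₀, hbelow⟩ := hswap.resolve_right fun h => htiv h.2.1
      rw [← firstGap_eq hj₀ hbelow] at hj₀N ⊢
      exact fillF_insert_firstGap hj₀N hlt
    · rfl
  have hjv : jv ∈ τ iv := by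
    rcases hswap with ⟨h, -⟩ | ⟨h, -⟩
    exacts [mem_of_mem_tailT h, (mem_upT.1 h).2.1]
  have hjvN : jv < n iv := mem_range.1 (hsub iv hiv hjv)
  apply eq_or_revGTN_and_card_phiMap_le (subset_fillF _ _ _ hjv)
  simp only [hτ', if_true]
  rcases hswap with ⟨-, -, hlt, -, hj₀N, hj₀, hbelow⟩ | ⟨hup, rfl, -, hj₀, hbelow⟩
  · split_ifs with hi₀
    · subst hi₀
      rw [← firstGap_eq hj₀ hbelow] at hj₀N ⊢
      rw [fillF_insert_firstGap_erase hjv hj₀N hlt]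
      exact fillF_erase_eq_or_eq_gapSwap hjv hjvN (hcard _ hiv)
    · exact fillF_erase_eq_or_eq_gapSwap hjv hjvN (hcard _ hiv)
  · obtain ⟨hfull, -, g, hg, hgjv⟩ := mem_upT.1 hup
    have hgap : firstGap (τ i₀) < jv := (firstGap_le_of_notMem (mem_sdiff.1 hg).2).trans_lt hgjv
    rw [if_pos rfl, ← firstGap_eq hj₀ hbelow, fillF_of_card_le hfull.ge]
    exact Or.inr ⟨hgap, fillF_of_card_le (hfull ▸ card_gapSwap hjv).ge⟩

/-- For `τ' = bk(τ,γ) = (τ - v) ∪ w` with `v` in block `iv`: for every block `t ≠ iv`,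
`fl(τ,t) = fl(τ',t)` (so `Φ(τ)` and `Φ(τ')` have the same `X_t`-parts); moreover
`fl(τ,iv) ⪯ fl(τ',iv)` in revlex and `deg Φ(τ')_{X_iv} ≤ deg Φ(τ)_{X_iv}`. -/
theorem stmt14 (m d : ℕ) (n a : ℕ → ℕ)
    (hd1 : 1 ≤ d) (hd2 : d ≤ ∑ i ∈ Finset.range m, a i)
    (ha : ∀ i, i < m → 0 < a i ∧ a i ≤ n i)
    (τ : ℕ → Finset ℕ) (hτ : IsFacetT m d n a τ)
    (iv jv i₀ j₀ : ℕ) (hiv : iv < m)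
    (hswap :
      (jv ∈ tailT m a n τ iv ∧ i₀ < m ∧ (τ i₀).card < a i₀ ∧
        (∀ t, t < i₀ → (τ t).card = a t) ∧ j₀ < n i₀ ∧ j₀ ∉ τ i₀ ∧
        (∀ g, g < j₀ → g ∈ τ i₀)) ∨
      (jv ∈ upT a n τ iv ∧ i₀ = iv ∧ j₀ < n iv ∧ j₀ ∉ τ iv ∧ (∀ g, g < j₀ → g ∈ τ iv)))
    (τ' : ℕ → Finset ℕ)
    (hτ' : τ' = fun t => (if t = i₀ then insert j₀ else id)
        (if t = iv then (τ t).erase jv else τ t)) :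
    (∀ t, t < m → t ≠ iv →
      fillF (τ' t) (a t) (n t) = fillF (τ t) (a t) (n t) ∧
      PhiBlock a n τ' t = PhiBlock a n τ t) ∧
    (fillF (τ iv) (a iv) (n iv) = fillF (τ' iv) (a iv) (n iv) ∨
      RevGTN (fillF (τ' iv) (a iv) (n iv)) (fillF (τ iv) (a iv) (n iv))) ∧
    Multiset.card (PhiBlock a n τ' iv) ≤ Multiset.card (PhiBlock a n τ iv) :=
  stmt14_general m d n a τ hτ iv jv i₀ j₀ hiv hswap τ' hτ'
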